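/- For each a > 0, the curve γ(y) = (x(y), y) with x(y) = (1/√3)(cosh y − cosh a), y ∈ (0,∞), satisfies the geodesic equation of the metric ds² = P(y)(dx²+dy²): x(y) satisfies dx/dy = sinh(y)/√3, and this curve solves x'' + 2k(y) x' y' = 0, y'' + k(y)(y'² − x'²) = 0 in unit-speed parametrization, where k(y) = -12 e^{2y}(e^{2y}+1)/(e^{6y}+9e^{4y}-9e^{2y}-1). -/

import Mathlib

open Real

noncomputable def P (y : ℝ) : ℝ :=
  (Real.exp (4*y) + 10 * Real.exp (2*y) + 1) / (4 * (Real.exp (2*y) - 1)^2)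

noncomputable def k (y : ℝ) : ℝ :=
  -(12 * Real.exp (2*y) * (Real.exp (2*y) + 1)) /
    (Real.exp (6*y) + 9 * Real.exp (4*y) - 9 * Real.exp (2*y) - 1)

/-- Explicit formula for the derivative of `P`. -/
noncomputable def Pd (y : ℝ) : ℝ :=
  ((4 * Real.exp (4*y) + 20 * Real.exp (2*y)) * (4 * (Real.exp (2*y) - 1)^2)
    - (Real.exp (4*y) + 10 * Real.exp (2*y) + 1)
      * (16 * Real.exp (2*y) * (Real.exp (2*y) - 1)))
    / (4 * (Real.exp (2*y) - 1)^2)^2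

lemma exp_two_mul' (y : ℝ) : Real.exp (2*y) = Real.exp y ^ 2 := by
  rw [two_mul, Real.exp_add, sq]

lemma exp_four_mul' (y : ℝ) : Real.exp (4*y) = Real.exp y ^ 4 := by
  rw [show (4:ℝ)*y = 2*y + 2*y by ring, Real.exp_add, exp_two_mul']; ring

lemma exp_six_mul' (y : ℝ) : Real.exp (6*y) = Real.exp y ^ 6 := by
  rw [show (6:ℝ)*y = 2*y + (2*y + 2*y) by ring, Real.exp_add, Real.exp_add, exp_two_mul']; ring

lemma hasDerivAt_P (y : ℝ) (h : Real.exp (2*y) ≠ 1) : HasDerivAt P (Pd y) y := by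
  have hlin2 : HasDerivAt (fun x : ℝ => 2*x) 2 y := by
    simpa using (hasDerivAt_id y).const_mul 2
  have hlin4 : HasDerivAt (fun x : ℝ => 4*x) 4 y := by
    simpa using (hasDerivAt_id y).const_mul 4
  have h2 : HasDerivAt (fun x : ℝ => Real.exp (2*x)) (Real.exp (2*y) * 2) y := hlin2.exp
  have h4 : HasDerivAt (fun x : ℝ => Real.exp (4*x)) (Real.exp (4*y) * 4) y := hlin4.exp
  have hden0 : (4 * (Real.exp (2*y) - 1)^2) ≠ 0 := by
    have h1 : Real.exp (2*y) - 1 ≠ 0 := sub_ne_zero.mpr h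
    positivity
  have hnum := (h4.add (h2.const_mul 10)).add_const 1
  have hden := ((h2.sub_const 1).pow 2).const_mul 4
  have hdiv := hnum.div hden hden0
  have hPfun : P = fun y : ℝ =>
      (Real.exp (4*y) + 10 * Real.exp (2*y) + 1) / (4 * (Real.exp (2*y) - 1)^2) := rfl
  rw [hPfun]
  refine hdiv.congr_deriv ?_
  unfold Pd
  simp only [Pi.add_apply, Pi.pow_apply, Nat.cast_ofNat]
  ring

lemma P_pos (y : ℝ) (hy : 0 < y) : 0 < P y := by
  have h1 : (1:ℝ) < Real.exp (2*y) := by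
    simpa using Real.exp_lt_exp.mpr (by linarith : (0:ℝ) < 2*y)
  have h2 : (0:ℝ) < Real.exp (2*y) - 1 := by linarith
  unfold P
  have h3 : (0:ℝ) < Real.exp (4*y) + 10 * Real.exp (2*y) + 1 := by positivity
  have h4 : (0:ℝ) < 4 * (Real.exp (2*y) - 1)^2 := by positivity
  exact div_pos h3 h4

lemma identity1 (y : ℝ) (hy : 0 < y) :
    3 * Real.cosh y + k y * Real.sinh y * (3 + Real.sinh y ^ 2) = 0 := by
  have hv : 1 < Real.exp y := by simpa using Real.exp_lt_exp.mpr hy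
  have hv0 : Real.exp y ≠ 0 := (Real.exp_pos y).ne'
  unfold k
  rw [Real.cosh_eq, Real.sinh_eq, Real.exp_neg, exp_two_mul', exp_four_mul', exp_six_mul']
  have h1' : (0:ℝ) < Real.exp y ^ 2 - 1 := by nlinarith
  have h1 : Real.exp y ^ 2 - 1 ≠ 0 := h1'.ne'
  have h2' : (0:ℝ) < Real.exp y ^ 6 + 9 * Real.exp y ^ 4 - 9 * Real.exp y ^ 2 - 1 := by
    have hfac : Real.exp y ^ 6 + 9 * Real.exp y ^ 4 - 9 * Real.exp y ^ 2 - 1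
        = (Real.exp y ^ 2 - 1) * (Real.exp y ^ 4 + 10 * Real.exp y ^ 2 + 1) := by ring
    rw [hfac]
    exact mul_pos h1' (by positivity)
  have h2 : Real.exp y ^ 6 + 9 * Real.exp y ^ 4 - 9 * Real.exp y ^ 2 - 1 ≠ 0 := h2'.ne'
  have h3 : Real.exp y ^ 2 * (Real.exp y ^ 2 * (Real.exp y ^ 2 + 9) - 9) - 1 ≠ 0 := by
    convert h2 using 1; ring
  field_simp
  ring

lemma identity2 (y : ℝ) (hy : 0 < y) :
    3 * (Pd y * (Real.sinh y ^ 2 + 3) + 2 * P y * Real.sinh y * Real.cosh y)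
      = 2 * k y * P y * (Real.sinh y ^ 2 + 3) * (3 - Real.sinh y ^ 2) := by
  have hv : 1 < Real.exp y := by simpa using Real.exp_lt_exp.mpr hy
  have hv0 : Real.exp y ≠ 0 := (Real.exp_pos y).ne'
  unfold k P Pd
  rw [Real.cosh_eq, Real.sinh_eq, Real.exp_neg, exp_two_mul', exp_four_mul', exp_six_mul']
  have h1' : (0:ℝ) < Real.exp y ^ 2 - 1 := by nlinarith
  have h1 : Real.exp y ^ 2 - 1 ≠ 0 := h1'.ne'
  have h2' : (0:ℝ) < Real.exp y ^ 6 + 9 * Real.exp y ^ 4 - 9 * Real.exp y ^ 2 - 1 := by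
    have hfac : Real.exp y ^ 6 + 9 * Real.exp y ^ 4 - 9 * Real.exp y ^ 2 - 1
        = (Real.exp y ^ 2 - 1) * (Real.exp y ^ 4 + 10 * Real.exp y ^ 2 + 1) := by ring
    rw [hfac]
    exact mul_pos h1' (by positivity)
  have h2 : Real.exp y ^ 6 + 9 * Real.exp y ^ 4 - 9 * Real.exp y ^ 2 - 1 ≠ 0 := h2'.ne'
  have h3 : Real.exp y ^ 2 * (Real.exp y ^ 2 * (Real.exp y ^ 2 + 9) - 9) - 1 ≠ 0 := by
    convert h2 using 1; ring
  field_simp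
  ring

/-- The curve `x(y) = (cosh y − cosh a)/√3` is a geodesic of `P(y)(dx²+dy²)`:
its slope is `sinh y/√3`, and any unit-speed parametrization of it satisfies
the geodesic equations. -/
theorem stmt_13 (a : ℝ) (ha : 0 < a) :
    (∀ y : ℝ, 0 < y →
      deriv (fun y' => (Real.cosh y' - Real.cosh a) / Real.sqrt 3) y =
        Real.sinh y / Real.sqrt 3) ∧
    (∀ X Y : ℝ → ℝ, ContDiff ℝ 2 X → ContDiff ℝ 2 Y →
      (∀ t, 0 < Y t) →
      (∀ t, X t = (Real.cosh (Y t) - Real.cosh a) / Real.sqrt 3) →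
      (∀ t, P (Y t) * ((deriv X t)^2 + (deriv Y t)^2) = 1) →
      ∀ t : ℝ,
        deriv (deriv X) t + 2 * k (Y t) * deriv X t * deriv Y t = 0 ∧
        deriv (deriv Y) t + k (Y t) * ((deriv Y t)^2 - (deriv X t)^2) = 0) := by
  have hs3 : Real.sqrt 3 ≠ 0 := by positivity
  have hsq3 : Real.sqrt 3 ^ 2 = 3 := Real.sq_sqrt (by norm_num)
  constructor
  · intro y hy
    exact (((Real.hasDerivAt_cosh y).sub_const _).div_const _).deriv
  · intro X Y hX hY hYpos hXeq hUnit t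
    have hXfun : X = fun t => (Real.cosh (Y t) - Real.cosh a) / Real.sqrt 3 := funext hXeq
    have hYdiff : Differentiable ℝ Y := hY.differentiable (by norm_num)
    have hY' : Differentiable ℝ (deriv Y) := by
      have h2 : ContDiff ℝ ((1:ℕ∞) + 1) Y := by
        exact_mod_cast hY
      exact (contDiff_succ_iff_deriv.mp h2).2.2.differentiable (by norm_num)
    -- first derivative of X
    have hA : ∀ u, HasDerivAt X (Real.sinh (Y u) * deriv Y u / Real.sqrt 3) u := by
      intro u
      rw [hXfun]
      exact (((Real.hasDerivAt_cosh (Y u)).comp u (hYdiff u).hasDerivAt).sub_const _).div_const _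
    have hdX : ∀ u, deriv X u = Real.sinh (Y u) * deriv Y u / Real.sqrt 3 := fun u => (hA u).deriv
    -- second derivative of X
    have hB : HasDerivAt (deriv X)
        ((Real.cosh (Y t) * deriv Y t * deriv Y t
          + Real.sinh (Y t) * deriv (deriv Y) t) / Real.sqrt 3) t := by
      have hfun : deriv X = fun u => Real.sinh (Y u) * deriv Y u / Real.sqrt 3 := funext hdX
      rw [hfun]
      exact (((Real.hasDerivAt_sinh (Y t)).comp t (hYdiff t).hasDerivAt).mul
        (hY' t).hasDerivAt).div_const _
    have hx1 : deriv X t = Real.sinh (Y t) * deriv Y t / Real.sqrt 3 := hdX t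
    have hx2 : deriv (deriv X) t
        = (Real.cosh (Y t) * deriv Y t * deriv Y t
          + Real.sinh (Y t) * deriv (deriv Y) t) / Real.sqrt 3 := hB.deriv
    -- derivative of the unit-speed relation
    have hexp1 : (1:ℝ) < Real.exp (2 * Y t) := by
      simpa using Real.exp_lt_exp.mpr (by linarith [hYpos t] : (0:ℝ) < 2 * Y t)
    have hPd : HasDerivAt (fun u => P (Y u)) (Pd (Y t) * deriv Y t) t :=
      (hasDerivAt_P (Y t) hexp1.ne').comp t (hYdiff t).hasDerivAt
    have hg : HasDerivAt (fun u => P (Y u) * ((deriv X u)^2 + (deriv Y u)^2))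
        (Pd (Y t) * deriv Y t * ((deriv X t)^2 + (deriv Y t)^2)
          + P (Y t) * ((2:ℝ) * deriv X t ^ 1
              * ((Real.cosh (Y t) * deriv Y t * deriv Y t
                + Real.sinh (Y t) * deriv (deriv Y) t) / Real.sqrt 3)
            + (2:ℝ) * deriv Y t ^ 1 * deriv (deriv Y) t)) t :=
      hPd.mul ((hB.pow 2).add (((hY' t).hasDerivAt).pow 2))
    have hgconst : (fun u => P (Y u) * ((deriv X u)^2 + (deriv Y u)^2)) = fun _ => (1:ℝ) :=
      funext hUnit
    have hC := hg.deriv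
    rw [hgconst] at hC
    simp only [deriv_const'] at hC
    replace hC := hC.symm
    -- basic nonvanishing facts
    have hP0 : 0 < P (Y t) := P_pos _ (hYpos t)
    have hy1 : deriv Y t ≠ 0 := by
      intro h0
      have hx0 : deriv X t = 0 := by rw [hx1, h0]; ring
      have := hUnit t
      rw [hx0, h0] at this
      norm_num at this
    -- sqrt-free reformulations
    have hx1sq : (deriv X t)^2 = Real.sinh (Y t)^2 * (deriv Y t)^2 / 3 := by
      rw [hx1, div_pow, hsq3, mul_pow]
    have hprod : deriv X t * ((Real.cosh (Y t) * deriv Y t * deriv Y t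
          + Real.sinh (Y t) * deriv (deriv Y) t) / Real.sqrt 3)
        = Real.sinh (Y t) * deriv Y t * (Real.cosh (Y t) * deriv Y t * deriv Y t
          + Real.sinh (Y t) * deriv (deriv Y) t) / 3 := by
      rw [hx1, div_mul_div_comm, Real.mul_self_sqrt (by norm_num : (0:ℝ) ≤ 3)]
    have h3x1 : Real.sqrt 3 * deriv X t = Real.sinh (Y t) * deriv Y t := by
      rw [hx1]; field_simp
    have h3x2 : Real.sqrt 3 * deriv (deriv X) t
        = Real.cosh (Y t) * deriv Y t * deriv Y t + Real.sinh (Y t) * deriv (deriv Y) t := by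
      rw [hx2]; field_simp
    -- cleaned form of the differentiated unit-speed relation
    have hC2 : Pd (Y t) * (Real.sinh (Y t)^2 + 3) * (deriv Y t)^2
        + 2 * P (Y t) * Real.sinh (Y t) * Real.cosh (Y t) * (deriv Y t)^2
        + 2 * P (Y t) * (Real.sinh (Y t)^2 + 3) * deriv (deriv Y) t = 0 := by
      refine mul_left_cancel₀ hy1 ?_
      linear_combination 3*hC - 3*Pd (Y t)*deriv Y t*hx1sq - 6*P (Y t)*hprod
    have hI1 := identity1 (Y t) (hYpos t)
    have hI2 := identity2 (Y t) (hYpos t)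
    -- second geodesic equation
    have key2 : 2 * P (Y t) * (Real.sinh (Y t)^2 + 3)
        * (deriv (deriv Y) t + k (Y t) * ((deriv Y t)^2 - (deriv X t)^2)) = 0 := by
      linear_combination hC2 - 2*P (Y t)*(Real.sinh (Y t)^2+3)*k (Y t)*hx1sq
        - ((deriv Y t)^2/3)*hI2
    have hpos2 : (0:ℝ) < 2 * P (Y t) * (Real.sinh (Y t)^2 + 3) := by
      have h1 : (0:ℝ) < Real.sinh (Y t)^2 + 3 := by positivity
      nlinarith
    have hG2 : deriv (deriv Y) t + k (Y t) * ((deriv Y t)^2 - (deriv X t)^2) = 0 := by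
      rcases mul_eq_zero.mp key2 with h | h
      · exact absurd h hpos2.ne'
      · exact h
    -- first geodesic equation
    have key1 : Real.sqrt 3
        * (deriv (deriv X) t + 2 * k (Y t) * deriv X t * deriv Y t) = 0 := by
      linear_combination h3x2 + 2*k (Y t)*deriv Y t*h3x1 + Real.sinh (Y t)*hG2
        + Real.sinh (Y t)*k (Y t)*hx1sq + ((deriv Y t)^2/3)*hI1
    have hG1 : deriv (deriv X) t + 2 * k (Y t) * deriv X t * deriv Y t = 0 := by
      rcases mul_eq_zero.mp key1 with h | h
      · exact absurd h hs3
      · exact h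
    exact ⟨hG1, hG2⟩
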